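/- For every n ≥ 0, the following three sets have the same cardinality: (i) Motzkin paths of length n+1 with no peaks (no factor UD); (ii) Motzkin paths of length n with no valleys (no factor DU); (iii) uneven bicolored Motzkin paths of size n, i.e., bicolored Motzkin paths M with u(M) + h2(M) + 2(d(M) + h1(M)) = n. -/

import Mathlib

/-- Steps of a Motzkin path: up, down, horizontal. -/
inductive MStep : Type
  | U | D | H
  deriving DecidableEq

/-- A Motzkin path: a word over {U,D,H} such that every prefix has at least as many U's as
D's, and the whole word has equally many U's and D's. -/
def IsMotzkin (w : List MStep) : Prop :=
  (∀ j, (w.take j).count MStep.D ≤ (w.take j).count MStep.U) ∧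
    w.count MStep.U = w.count MStep.D

/-- Steps of a bicolored Motzkin path. -/
inductive BStep : Type
  | U | D | H1 | H2
  deriving DecidableEq

/-- A bicolored Motzkin path: a word over {U,D,H1,H2} such that every prefix has at least as
many U's as D's, and the whole word has equally many U's and D's. -/
def IsBicoloredMotzkin (w : List BStep) : Prop :=
  (∀ j, (w.take j).count BStep.D ≤ (w.take j).count BStep.U) ∧
    w.count BStep.U = w.count BStep.D

/-!
All three families have the same first-return decomposition, with generating function
`T = 1 + zT + z²T + z³T²`. Cutting a path at the first return `U v D v'` to the axis:
* a nonempty peakless path is `H`, `H P`, `U P D` or `U P D P`, where `P` is nonempty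
  peakless (`v` cannot be empty, since `UD` is a peak);
* a valleyless path is empty, `H V`, `U V D` or `U V D H V` (after a return the next step
  is neither `U`, which would make a valley, nor `D`);
* a bicolored path is empty, `H2 B`, `H1 B` or `U B D B`, and these shapes add `1`, `2`, `3`
  to the size.
So each family is the injective image of the trees `PathTree` with the matching size, under
the encoding that reads these decompositions backwards.
-/

namespace PeaklessValleyless

open List

section Balanced

variable {α : Type*} {e : α → ℤ} {u d x : α} {v w v' w' : List α}

theorem prefix_append_iff {p : List α} :
    p <+: v ++ w ↔ p <+: v ∨ ∃ q, q <+: w ∧ p = v ++ q := by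
  refine ⟨fun h => ?_, ?_⟩
  · rw [prefix_iff_eq_take, take_append] at h
    by_cases hp : p.length ≤ v.length
    · left
      rw [h, Nat.sub_eq_zero_of_le hp, take_zero, append_nil]
      exact take_prefix _ _
    · right
      rw [take_of_length_le (by omega)] at h
      exact ⟨_, take_prefix _ _, h⟩
  · rintro (h | ⟨q, hq, rfl⟩)
    · exact h.trans (prefix_append v w)
    · exact (prefix_append_right_inj v).mpr hq

theorem forall_prefix_iff_forall_take {P : List α → Prop} :
    (∀ p, p <+: w → P p) ↔ ∀ j, P (w.take j) :=
  ⟨fun h j => h _ (take_prefix j w), fun h _ hp => prefix_iff_eq_take.mp hp ▸ h _⟩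

/-- `e x` is the height change of the step `x`. -/
def IsBalanced (e : α → ℤ) (w : List α) : Prop :=
  (∀ p, p <+: w → 0 ≤ (p.map e).sum) ∧ (w.map e).sum = 0

theorem isBalanced_nil : IsBalanced e [] :=
  ⟨fun _ hp => by simp [prefix_nil.mp hp], rfl⟩

theorem isBalanced_cons_iff_of_eq_zero (hx : e x = 0) :
    IsBalanced e (x :: w) ↔ IsBalanced e w := by
  simp only [IsBalanced, prefix_cons_iff, forall_eq_or_imp, exists_imp, and_imp, map_cons,
    sum_cons, hx, zero_add]
  grind

theorem IsBalanced.head_nonneg (h : IsBalanced e (x :: w)) : 0 ≤ e x := by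
  simpa using h.1 [x] (by simp)

theorem IsBalanced.append (hv : IsBalanced e v) (hw : IsBalanced e w) :
    IsBalanced e (v ++ w) := by
  refine ⟨fun p hp => ?_, by simp [hv.2, hw.2]⟩
  rcases prefix_append_iff.mp hp with hp | ⟨q, hq, rfl⟩
  · exact hv.1 p hp
  · simpa [hv.2] using hw.1 q hq

theorem IsBalanced.wrap (hv : IsBalanced e v) (hu : e u = 1) (hd : e d = -1) :
    IsBalanced e (u :: v ++ [d]) := by
  refine ⟨fun p hp => ?_, by simp [hu, hd, hv.2]⟩
  rcases prefix_cons_iff.mp hp with rfl | ⟨q, rfl, hq⟩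
  · simp
  rcases prefix_append_iff.mp hq with hq | ⟨r, hr, rfl⟩
  · have := hv.1 q hq
    simp only [map_cons, sum_cons, hu]
    omega
  · rcases prefix_cons_iff.mp hr with rfl | ⟨_, rfl, hnil⟩
    · simp [hu, hv.2]
    · simp [prefix_nil.mp hnil, hu, hd, hv.2]

theorem IsBalanced.cons_append_cons (hv : IsBalanced e v) (hw : IsBalanced e w) (hu : e u = 1)
    (hd : e d = -1) : IsBalanced e (u :: v ++ d :: w) := by
  simpa using (hv.wrap hu hd).append hw

/-- `v` is the part of `w` before its first step below the starting height `m`. -/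
theorem exists_first_return_from_height (hstep : ∀ x, -1 ≤ e x) (hd : ∀ x, e x = -1 → x = d)
    {m : ℤ} (hm : 1 ≤ m) (hpre : ∀ p, p <+: w → 0 ≤ m + (p.map e).sum)
    (hw : m + (w.map e).sum = 0) :
    ∃ v v', w = v ++ d :: v' ∧ (∀ p, p <+: v → 1 ≤ m + (p.map e).sum) ∧
      m + (v.map e).sum = 1 ∧ IsBalanced e v' := by
  induction w generalizing m with
  | nil => simp at hw; omega
  | cons x w ih =>
    have hx := hpre [x] (by simp)
    simp only [map_cons, sum_cons, map_nil, sum_nil, add_zero] at hx hw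
    have hpre' (p) (hp : p <+: w) : 0 ≤ m + e x + (p.map e).sum := by
      simpa [add_assoc] using hpre (x :: p) (by simpa using hp)
    by_cases hreturn : m + e x = 0
    · have hxd : e x = -1 := by have := hstep x; omega
      refine ⟨[], w, by rw [hd x hxd]; rfl, fun p hp => ?_, by simp; omega, fun p hp => ?_,
        by omega⟩
      · simp [prefix_nil.mp hp, hm]
      · simpa [hreturn] using hpre' p hp
    · obtain ⟨v, v', rfl, hv, hv1, hv'⟩ := ih (by omega) hpre' (by omega)
      refine ⟨x :: v, v', rfl, fun p hp => ?_, by simp; omega, hv'⟩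
      rcases prefix_cons_iff.mp hp with rfl | ⟨q, rfl, hq⟩
      · simpa using hm
      · have := hv q hq
        simp only [map_cons, sum_cons]
        omega

theorem IsBalanced.exists_first_return (hstep : ∀ x, -1 ≤ e x) (hd : ∀ x, e x = -1 → x = d)
    (hu : e u = 1) (h : IsBalanced e (u :: w)) :
    ∃ v v', w = v ++ d :: v' ∧ IsBalanced e v ∧ IsBalanced e v' := by
  obtain ⟨v, v', rfl, hv, hv1, hv'⟩ := exists_first_return_from_height hstep hd le_rfl
    (fun p hp => by simpa [hu] using h.1 (u :: p) (by simpa using hp)) (by simpa [hu] using h.2)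
  exact ⟨v, v', rfl, ⟨fun p hp => by linarith [hv p hp], by linarith⟩, hv'⟩

theorem IsBalanced.append_cons_inj (hd : e d = -1) (hv : IsBalanced e v)
    (hv' : IsBalanced e v') (h : v ++ d :: w = v' ++ d :: w') : v = v' ∧ w = w' := by
  wlog hle : v.length ≤ v'.length generalizing v v' w w'
  · exact (this hv' hv h.symm (by omega)).imp Eq.symm Eq.symm
  rcases hle.eq_or_lt with hlen | hlt
  · obtain ⟨rfl, hw⟩ := append_inj h hlen
    exact ⟨rfl, (cons_inj_right d).mp hw⟩
  · have hpre : v ++ [d] <+: v' := prefix_of_prefix_length_le ⟨w, by simp [h]⟩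
      (prefix_append v' (d :: w')) (by simpa using hlt)
    have := hv'.1 _ hpre
    simp [hv.2, hd] at this

end Balanced

section Avoids

variable {α : Type*}

def Avoids (a b : α) (w : List α) : Prop :=
  w.IsChain fun x y => ¬(x = a ∧ y = b)

theorem avoids_iff_not_infix {a b : α} {w : List α} : Avoids a b w ↔ ¬[a, b] <:+: w := by
  rw [Avoids, isChain_iff_forall_rel_of_append_cons_cons]
  constructor
  · rintro h ⟨s, t, rfl⟩
    exact h (l₁ := s) (l₂ := t) (by simp) ⟨rfl, rfl⟩
  · rintro h x y s t rfl ⟨rfl, rfl⟩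
    exact h ⟨s, t, by simp⟩

end Avoids

def _root_.MStep.rise : MStep → ℤ
  | .U => 1 | .D => -1 | .H => 0

def _root_.BStep.rise : BStep → ℤ
  | .U => 1 | .D => -1 | .H1 => 0 | .H2 => 0

theorem _root_.MStep.neg_one_le_rise (x : MStep) : -1 ≤ x.rise := by
  cases x <;> decide

theorem _root_.MStep.eq_D_of_rise_eq_neg_one (x : MStep) (h : x.rise = -1) : x = .D := by
  cases x <;> simp_all [MStep.rise]

theorem _root_.BStep.neg_one_le_rise (x : BStep) : -1 ≤ x.rise := by
  cases x <;> decide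

theorem _root_.BStep.eq_D_of_rise_eq_neg_one (x : BStep) (h : x.rise = -1) : x = .D := by
  cases x <;> simp_all [BStep.rise]

theorem sum_map_mStep_rise (w : List MStep) :
    (w.map MStep.rise).sum = (w.count .U : ℤ) - w.count .D := by
  induction w with
  | nil => simp
  | cons x w ih => cases x <;> simp [ih, MStep.rise] <;> ring

theorem sum_map_bStep_rise (w : List BStep) :
    (w.map BStep.rise).sum = (w.count .U : ℤ) - w.count .D := by
  induction w with
  | nil => simp
  | cons x w ih => cases x <;> simp [ih, BStep.rise] <;> ring

theorem isMotzkin_iff_isBalanced {w : List MStep} : IsMotzkin w ↔ IsBalanced MStep.rise w := by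
  simp only [IsMotzkin, IsBalanced, forall_prefix_iff_forall_take, sum_map_mStep_rise]
  constructor <;> exact fun ⟨hpre, htot⟩ => ⟨fun j => by have := hpre j; omega, by omega⟩

theorem isBicoloredMotzkin_iff_isBalanced {w : List BStep} :
    IsBicoloredMotzkin w ↔ IsBalanced BStep.rise w := by
  simp only [IsBicoloredMotzkin, IsBalanced, forall_prefix_iff_forall_take, sum_map_bStep_rise]
  constructor <;> exact fun ⟨hpre, htot⟩ => ⟨fun j => by have := hpre j; omega, by omega⟩

def bicoloredSize (m : List BStep) : ℕ :=
  m.count .U + m.count .H2 + 2 * (m.count .D + m.count .H1)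

inductive PathTree : Type
  | leaf
  | node₁ (t : PathTree)
  | node₂ (t : PathTree)
  | node₃ (t t' : PathTree)

namespace PathTree

def size : PathTree → ℕ
  | leaf => 0
  | node₁ t => t.size + 1
  | node₂ t => t.size + 2
  | node₃ t t' => t.size + t'.size + 3

def toPeakless : PathTree → List MStep
  | leaf => [.H]
  | node₁ t => .H :: t.toPeakless
  | node₂ t => .U :: t.toPeakless ++ [.D]
  | node₃ t t' => .U :: t.toPeakless ++ .D :: t'.toPeakless

def toValleyless : PathTree → List MStep
  | leaf => []
  | node₁ t => .H :: t.toValleyless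
  | node₂ t => .U :: t.toValleyless ++ [.D]
  | node₃ t t' => .U :: t.toValleyless ++ .D :: .H :: t'.toValleyless

def toBicolored : PathTree → List BStep
  | leaf => []
  | node₁ t => .H2 :: t.toBicolored
  | node₂ t => .H1 :: t.toBicolored
  | node₃ t t' => .U :: t.toBicolored ++ .D :: t'.toBicolored

theorem length_toPeakless (t : PathTree) : t.toPeakless.length = t.size + 1 := by
  induction t <;> grind [toPeakless, size, length_cons, length_append]

theorem length_toValleyless (t : PathTree) : t.toValleyless.length = t.size := by
  induction t <;> grind [toValleyless, size, length_cons, length_append]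

theorem bicoloredSize_toBicolored (t : PathTree) : bicoloredSize t.toBicolored = t.size := by
  induction t <;> simp [bicoloredSize, toBicolored, size] at * <;> omega

theorem isBalanced_toPeakless (t : PathTree) : IsBalanced MStep.rise t.toPeakless := by
  induction t with
  | leaf => exact (isBalanced_cons_iff_of_eq_zero (by rfl)).mpr isBalanced_nil
  | node₁ t ih => exact (isBalanced_cons_iff_of_eq_zero (by rfl)).mpr ih
  | node₂ t ih => exact ih.cons_append_cons isBalanced_nil (by rfl) (by rfl)
  | node₃ t t' ih ih' => exact ih.cons_append_cons ih' (by rfl) (by rfl)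

theorem isBalanced_toValleyless (t : PathTree) : IsBalanced MStep.rise t.toValleyless := by
  induction t with
  | leaf => exact isBalanced_nil
  | node₁ t ih => exact (isBalanced_cons_iff_of_eq_zero (by rfl)).mpr ih
  | node₂ t ih => exact ih.cons_append_cons isBalanced_nil (by rfl) (by rfl)
  | node₃ t t' ih ih' =>
    exact ih.cons_append_cons ((isBalanced_cons_iff_of_eq_zero (by rfl)).mpr ih') (by rfl) (by rfl)

theorem isBalanced_toBicolored (t : PathTree) : IsBalanced BStep.rise t.toBicolored := by
  induction t with
  | leaf => exact isBalanced_nil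
  | node₁ t ih | node₂ t ih => exact (isBalanced_cons_iff_of_eq_zero (by rfl)).mpr ih
  | node₃ t t' ih ih' => exact ih.cons_append_cons ih' (by rfl) (by rfl)

theorem toBicolored_injective : Function.Injective toBicolored := by
  intro t s h
  induction t generalizing s with
  | leaf => cases s <;> simp [toBicolored] at h ⊢
  | node₁ t ih | node₂ t ih => cases s <;> simp [toBicolored] at h ⊢; exact ih h
  | node₃ t t' ih ih' =>
    cases s <;> simp [toBicolored] at h ⊢
    obtain ⟨h₁, h₂⟩ := (isBalanced_toBicolored _).append_cons_inj (by rfl)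
      (isBalanced_toBicolored _) h
    exact ⟨ih h₁, ih' h₂⟩

theorem toValleyless_injective : Function.Injective toValleyless := by
  intro t s h
  induction t generalizing s with
  | leaf => cases s <;> simp [toValleyless] at h ⊢
  | node₁ t ih => cases s <;> simp [toValleyless] at h ⊢; exact ih h
  | node₂ t ih =>
    cases s <;> simp only [toValleyless, cons_append, cons.injEq, reduceCtorEq, false_and,
      true_and, node₂.injEq] at h ⊢
    all_goals obtain ⟨h₁, h₂⟩ :=
      (isBalanced_toValleyless _).append_cons_inj (by rfl) (isBalanced_toValleyless _) h
    · exact ih h₁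
    · simp at h₂
  | node₃ t t' ih ih' =>
    cases s <;> simp only [toValleyless, cons_append, cons.injEq, reduceCtorEq, false_and,
      true_and, node₃.injEq] at h ⊢
    all_goals obtain ⟨h₁, h₂⟩ :=
      (isBalanced_toValleyless _).append_cons_inj (by rfl) (isBalanced_toValleyless _) h
    · simp at h₂
    · exact ⟨ih h₁, ih' (by simpa using h₂)⟩

theorem toPeakless_ne_nil (t : PathTree) : t.toPeakless ≠ [] := by
  cases t <;> simp [toPeakless]

theorem toPeakless_injective : Function.Injective toPeakless := by
  intro t s h
  induction t generalizing s with
  | leaf => cases s <;> simp [toPeakless, toPeakless_ne_nil] at h ⊢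
  | node₁ t ih => cases s <;> simp [toPeakless, toPeakless_ne_nil] at h ⊢; exact ih h
  | node₂ t ih =>
    cases s <;> simp only [toPeakless, cons_append, cons.injEq, reduceCtorEq, false_and,
      true_and, node₂.injEq] at h ⊢
    all_goals obtain ⟨h₁, h₂⟩ :=
      (isBalanced_toPeakless _).append_cons_inj (by rfl) (isBalanced_toPeakless _) h
    · exact ih h₁
    · exact toPeakless_ne_nil _ h₂.symm
  | node₃ t t' ih ih' =>
    cases s <;> simp only [toPeakless, cons_append, cons.injEq, reduceCtorEq, false_and,
      true_and, node₃.injEq] at h ⊢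
    all_goals obtain ⟨h₁, h₂⟩ :=
      (isBalanced_toPeakless _).append_cons_inj (by rfl) (isBalanced_toPeakless _) h
    · exact toPeakless_ne_nil _ h₂
    · exact ⟨ih h₁, ih' h₂⟩

theorem avoids_toValleyless (t : PathTree) : Avoids .D .U t.toValleyless := by
  induction t <;> simp_all [Avoids, toValleyless, isChain_append, isChain_cons]

theorem D_not_mem_head?_toPeakless (t : PathTree) : .D ∉ t.toPeakless.head? := by
  cases t <;> simp [toPeakless]

theorem U_not_mem_getLast?_toPeakless (t : PathTree) : .U ∉ t.toPeakless.getLast? := by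
  have getLast?_append_toPeakless (l : List MStep) (t : PathTree) :
      (l ++ t.toPeakless).getLast? = t.toPeakless.getLast? :=
    getLast?_append_of_ne_nil l (toPeakless_ne_nil t)
  induction t with
  | leaf => simp [toPeakless]
  | node₁ t ih => rwa [toPeakless, ← singleton_append, getLast?_append_toPeakless]
  | node₂ t _ => rw [toPeakless, getLast?_concat]; simp
  | node₃ t t' _ ih' =>
    rwa [toPeakless, getLast?_append_cons, ← singleton_append, getLast?_append_toPeakless]

theorem Avoids.U_cons_toPeakless_append {t : PathTree} {w : List MStep}
    (ht : Avoids .U .D t.toPeakless) (hw : Avoids .U .D (.D :: w)) :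
    Avoids .U .D (.U :: t.toPeakless ++ .D :: w) := by
  have hchain : Avoids .U .D (t.toPeakless ++ .D :: w) := by
    refine ht.append hw ?_
    rintro x hx _ _ ⟨rfl, -⟩
    exact U_not_mem_getLast?_toPeakless t hx
  refine hchain.cons ?_
  rintro y hy ⟨-, rfl⟩
  rw [head?_append_of_ne_nil _ (toPeakless_ne_nil t)] at hy
  exact D_not_mem_head?_toPeakless t hy

theorem avoids_toPeakless (t : PathTree) : Avoids .U .D t.toPeakless := by
  induction t with
  | leaf => exact isChain_singleton _
  | node₁ t ih => exact ih.cons (by simp)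
  | node₂ t ih => exact Avoids.U_cons_toPeakless_append ih (isChain_singleton _)
  | node₃ t t' ih ih' => exact Avoids.U_cons_toPeakless_append ih (ih'.cons (by simp))

theorem exists_toBicolored_eq : ∀ w : List BStep, IsBalanced BStep.rise w →
    ∃ t : PathTree, t.toBicolored = w
  | [], _ => ⟨leaf, rfl⟩
  | .D :: _, hw => absurd hw.head_nonneg (by simp [BStep.rise])
  | .H2 :: w, hw => by
    obtain ⟨t, rfl⟩ := exists_toBicolored_eq w ((isBalanced_cons_iff_of_eq_zero (by rfl)).mp hw)
    exact ⟨node₁ t, rfl⟩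
  | .H1 :: w, hw => by
    obtain ⟨t, rfl⟩ := exists_toBicolored_eq w ((isBalanced_cons_iff_of_eq_zero (by rfl)).mp hw)
    exact ⟨node₂ t, rfl⟩
  | .U :: w, hw => by
    obtain ⟨v, v', rfl, hv, hv'⟩ :=
      hw.exists_first_return BStep.neg_one_le_rise BStep.eq_D_of_rise_eq_neg_one (by rfl)
    obtain ⟨t, rfl⟩ := exists_toBicolored_eq v hv
    obtain ⟨t', rfl⟩ := exists_toBicolored_eq v' hv'
    exact ⟨node₃ t t', rfl⟩
termination_by w => w.length

theorem exists_toValleyless_eq : ∀ w : List MStep, IsBalanced MStep.rise w →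
    Avoids .D .U w → ∃ t : PathTree, t.toValleyless = w
  | [], _, _ => ⟨leaf, rfl⟩
  | .D :: _, hw, _ => absurd hw.head_nonneg (by simp [MStep.rise])
  | .H :: w, hw, ha => by
    obtain ⟨t, rfl⟩ := exists_toValleyless_eq w
      ((isBalanced_cons_iff_of_eq_zero (by rfl)).mp hw) ha.tail
    exact ⟨node₁ t, rfl⟩
  | .U :: w, hw, ha => by
    obtain ⟨v, v', hw_eq, hv, hv'⟩ :=
      hw.exists_first_return MStep.neg_one_le_rise MStep.eq_D_of_rise_eq_neg_one (by rfl)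
    obtain ⟨hav, hav', -⟩ := isChain_append.mp (hw_eq ▸ ha.tail)
    obtain ⟨t, rfl⟩ := exists_toValleyless_eq v hv hav
    rcases v' with _ | ⟨_ | _ | _, v''⟩
    · exact ⟨node₂ t, by rw [hw_eq]; rfl⟩
    · simp at hav'
    · exact absurd hv'.head_nonneg (by simp [MStep.rise])
    -- The default decreasing tactic does not see through `hw_eq`.
    · have : v''.length < w.length := by simp [hw_eq]; omega
      obtain ⟨t', rfl⟩ := exists_toValleyless_eq v''
        ((isBalanced_cons_iff_of_eq_zero (by rfl)).mp hv') hav'.tail.tail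
      exact ⟨node₃ t t', by rw [hw_eq]; rfl⟩
termination_by w => w.length

theorem exists_toPeakless_eq : ∀ w : List MStep, IsBalanced MStep.rise w →
    Avoids .U .D w → w ≠ [] → ∃ t : PathTree, t.toPeakless = w
  | [], _, _, hne => absurd rfl hne
  | .D :: _, hw, _, _ => absurd hw.head_nonneg (by simp [MStep.rise])
  | [.H], _, _, _ => ⟨leaf, rfl⟩
  | .H :: x :: w, hw, ha, _ => by
    obtain ⟨t, ht⟩ := exists_toPeakless_eq (x :: w)
      ((isBalanced_cons_iff_of_eq_zero (by rfl)).mp hw) ha.tail (cons_ne_nil x w)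
    exact ⟨node₁ t, by rw [toPeakless, ht]⟩
  | .U :: w, hw, ha, _ => by
    obtain ⟨v, v', rfl, hv, hv'⟩ :=
      hw.exists_first_return MStep.neg_one_le_rise MStep.eq_D_of_rise_eq_neg_one (by rfl)
    obtain ⟨hav, hav', -⟩ := isChain_append.mp ha.tail
    have hv_ne : v ≠ [] := by
      rintro rfl
      simp [Avoids] at ha
    obtain ⟨t, rfl⟩ := exists_toPeakless_eq v hv hav hv_ne
    rcases eq_or_ne v' [] with rfl | hv'_ne
    · exact ⟨node₂ t, rfl⟩
    · obtain ⟨t', rfl⟩ := exists_toPeakless_eq v' hv' hav'.tail hv'_ne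
      exact ⟨node₃ t t', rfl⟩
termination_by w => w.length

end PathTree

open PathTree

theorem ncard_peakless (n : ℕ) :
    {w : List MStep | IsMotzkin w ∧ w.length = n + 1 ∧ ¬[MStep.U, MStep.D] <:+: w}.ncard =
      {t : PathTree | t.size = n}.ncard := by
  rw [← Set.ncard_image_of_injective _ toPeakless_injective]
  congr 1
  ext w
  simp only [Set.mem_ofPred_eq, Set.mem_image, isMotzkin_iff_isBalanced, ← avoids_iff_not_infix]
  constructor
  · rintro ⟨hw, hlen, ha⟩
    obtain ⟨t, rfl⟩ := exists_toPeakless_eq w hw ha (ne_nil_of_length_eq_add_one hlen)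
    exact ⟨t, by simpa [length_toPeakless] using hlen, rfl⟩
  · rintro ⟨t, rfl, rfl⟩
    exact ⟨isBalanced_toPeakless t, length_toPeakless t, avoids_toPeakless t⟩

theorem ncard_valleyless (n : ℕ) :
    {w : List MStep | IsMotzkin w ∧ w.length = n ∧ ¬[MStep.D, MStep.U] <:+: w}.ncard =
      {t : PathTree | t.size = n}.ncard := by
  rw [← Set.ncard_image_of_injective _ toValleyless_injective]
  congr 1
  ext w
  simp only [Set.mem_ofPred_eq, Set.mem_image, isMotzkin_iff_isBalanced, ← avoids_iff_not_infix]
  constructor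
  · rintro ⟨hw, rfl, ha⟩
    obtain ⟨t, rfl⟩ := exists_toValleyless_eq w hw ha
    exact ⟨t, (length_toValleyless t).symm, rfl⟩
  · rintro ⟨t, rfl, rfl⟩
    exact ⟨isBalanced_toValleyless t, length_toValleyless t, avoids_toValleyless t⟩

theorem ncard_bicolored (n : ℕ) :
    {m : List BStep | IsBicoloredMotzkin m ∧ bicoloredSize m = n}.ncard =
      {t : PathTree | t.size = n}.ncard := by
  rw [← Set.ncard_image_of_injective _ toBicolored_injective]
  congr 1
  ext m
  simp only [Set.mem_ofPred_eq, Set.mem_image, isBicoloredMotzkin_iff_isBalanced]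
  constructor
  · rintro ⟨hm, rfl⟩
    obtain ⟨t, rfl⟩ := exists_toBicolored_eq m hm
    exact ⟨t, (bicoloredSize_toBicolored t).symm, rfl⟩
  · rintro ⟨t, rfl, rfl⟩
    exact ⟨isBalanced_toBicolored t, bicoloredSize_toBicolored t⟩

end PeaklessValleyless

/-- For every `n`, the following three sets are equinumerous: Motzkin paths of length `n+1`
with no peak `UD`; Motzkin paths of length `n` with no valley `DU`; and uneven bicolored
Motzkin paths of size `n`, i.e. bicolored Motzkin paths with `u + h2 + 2(d + h1) = n`. -/
theorem peakless_valleyless_uneven (n : ℕ) :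
    {w : List MStep | IsMotzkin w ∧ w.length = n + 1
        ∧ ¬ [MStep.U, MStep.D] <:+: w}.ncard
      = {w : List MStep | IsMotzkin w ∧ w.length = n
        ∧ ¬ [MStep.D, MStep.U] <:+: w}.ncard ∧
    {w : List MStep | IsMotzkin w ∧ w.length = n
        ∧ ¬ [MStep.D, MStep.U] <:+: w}.ncard
      = {m : List BStep | IsBicoloredMotzkin m ∧
          m.count BStep.U + m.count BStep.H2
            + 2 * (m.count BStep.D + m.count BStep.H1) = n}.ncard := by
  have hP := PeaklessValleyless.ncard_peakless n
  have hV := PeaklessValleyless.ncard_valleyless n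
  have hB := PeaklessValleyless.ncard_bicolored n
  exact ⟨hP.trans hV.symm, hV.trans hB.symm⟩
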